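/- arXiv:2601.15218 — 6 statements merged into one kernel-verified Lean document; each statement's English description precedes it below -/
import Mathlib

section
/- Let (X,d) be a Polish space, N ≥ 2, ρ a Borel probability measure on X, and h : [0,∞) → (0,∞] a strictly decreasing continuous function with inverse h^{-1}. Assume that if lim_{t→0^+} h(t) = +∞ then sup_{x∈X} ρ({x}) < 1/N, and assume 𝒞_∞(ρ) is finite with 𝒞_∞(ρ)/(N(N−1)) in the range of h. Then the integral repulsive cost 𝒞(ρ) := inf over N-couplings λ of ρ of ∫_{X^N} Σ_{1≤i<j≤N} h(d(x_i,x_j)) dλ satisfies 𝒞(ρ) ≥ h( 2 h^{-1}( 𝒞_∞(ρ)/(N(N−1)) ) ) · ( N·κ_ρ( h^{-1}( 𝒞_∞(ρ)/(N(N−1)) ) ) − 1 ) / (N(N−1)), where 𝒞_∞(ρ) := inf over N-couplings λ of the λ-essential supremum of Σ_{1≤i<j≤N} h(d(x_i,x_j)) and κ_ρ(α) := sup_{x∈X} ρ(B̄(x,α)). -/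
/-!
Fix a coupling `μ` of `ρ` and a closed ball `B` of radius `α`. If `k ≥ 1` of the points
`x₁, …, x_N` lie in `B`, then pairing the first of them with each of the others gives `k - 1`
pairs `i < j` with `xᵢ, xⱼ ∈ B`; such a pair is at distance at most `2α`, so it costs at least
`h (2α)`. Integrating `k ≤ 1 + #{pairs in B}` against `μ`, whose marginals are `ρ`, gives
`h (2α) (N ρ(B) - 1) ≤ ∫ c dμ`, and the theorem follows by taking the supremum over balls and
the infimum over couplings (the factor `1 / (N (N - 1))` only weakens the bound).
-/

open MeasureTheory Metric ENNReal Filter Finset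

section Combinatorics

variable {ι : Type*} [Fintype ι] [LinearOrder ι]

theorem card_filter_le_one_add_card_filter_lt (q : ι → Prop) [DecidablePred q] :
    #{i | q i} ≤ 1 + #{p : ι × ι | p.1 < p.2 ∧ q p.1 ∧ q p.2} := by
  set T : Finset ι := {i | q i}
  obtain hT | hT := T.eq_empty_or_nonempty
  · simp [hT]
  have hinj : #(T.erase (T.min' hT)) ≤ #{p : ι × ι | p.1 < p.2 ∧ q p.1 ∧ q p.2} := by
    refine card_le_card_of_injOn (fun j => (T.min' hT, j)) (fun j hj => ?_)
      (fun j _ k _ hjk => (Prod.mk.inj hjk).2)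
    have hmin : q (T.min' hT) := (mem_filter.mp (T.min'_mem hT)).2
    have hjT : q j := (mem_filter.mp (mem_of_mem_erase hj)).2
    simpa [hmin, hjT] using T.min'_lt_of_mem_erase_min' hT hj
  rw [← card_erase_add_one (T.min'_mem hT)]
  omega

end Combinatorics

section Cost

variable {ι X : Type*} [Fintype ι] [LinearOrder ι] [PseudoMetricSpace X]

noncomputable def pairwiseCost (h : ℝ → ℝ≥0∞) (x : ι → X) : ℝ≥0∞ :=
  ∑ p ∈ univ.filter (fun p : ι × ι => p.1 < p.2), h (dist (x p.1) (x p.2))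

open Classical in
theorem mul_card_pairs_mem_closedBall_le_pairwiseCost {h : ℝ → ℝ≥0∞}
    (hh : AntitoneOn h (Set.Ici 0)) (x : ι → X) (z : X) (α : ℝ) :
    h (2 * α) * #{p : ι × ι | p.1 < p.2 ∧ x p.1 ∈ closedBall z α ∧ x p.2 ∈ closedBall z α}
      ≤ pairwiseCost h x := by
  have hclose : ∀ i j, x i ∈ closedBall z α → x j ∈ closedBall z α → dist (x i) (x j) ≤ 2 * α :=
    fun i j hi hj => (dist_triangle_right _ _ z).trans (by rw [mem_closedBall] at hi hj; linarith)
  calc h (2 * α) * #{p : ι × ι | p.1 < p.2 ∧ x p.1 ∈ closedBall z α ∧ x p.2 ∈ closedBall z α}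
      = ∑ p ∈ univ.filter (fun p : ι × ι => p.1 < p.2 ∧ x p.1 ∈ closedBall z α ∧
          x p.2 ∈ closedBall z α), h (2 * α) := by
        rw [sum_const, nsmul_eq_mul, mul_comm]
    _ ≤ ∑ p ∈ univ.filter (fun p : ι × ι => p.1 < p.2 ∧ x p.1 ∈ closedBall z α ∧
          x p.2 ∈ closedBall z α), h (dist (x p.1) (x p.2)) := by
        refine sum_le_sum fun p hp => ?_
        obtain ⟨-, h1, h2⟩ := (mem_filter.mp hp).2
        have hd := hclose _ _ h1 h2
        exact hh dist_nonneg (dist_nonneg.trans hd) hd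
    _ ≤ pairwiseCost h x :=
        sum_le_sum_of_subset (monotone_filter_right _ fun _ _ hp => hp.1)

end Cost

section Coupling

variable {ι X : Type*} [Fintype ι] [MeasurableSpace X]

open Classical in
theorem lintegral_card_filter_mem {ρ : Measure X} {μ : Measure (ι → X)}
    (hmarg : ∀ i, μ.map (fun x => x i) = ρ) {B : Set X} (hB : MeasurableSet B) :
    ∫⁻ x, (#{i | x i ∈ B} : ℝ≥0∞) ∂μ = Fintype.card ι * ρ B := by
  have hi : ∀ i, ∫⁻ x, B.indicator 1 (x i) ∂μ = ρ B := fun i => by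
    rw [← lintegral_map (measurable_one.indicator hB) (measurable_pi_apply i), hmarg,
      lintegral_indicator_one hB]
  calc ∫⁻ x, (#{i | x i ∈ B} : ℝ≥0∞) ∂μ = ∫⁻ x, ∑ i, B.indicator 1 (x i) ∂μ := by
        simp_rw [natCast_card_filter]; rfl
    _ = ∑ i, ∫⁻ x, B.indicator 1 (x i) ∂μ := lintegral_finsetSum _ fun i _ =>
        (measurable_one.indicator hB).comp (measurable_pi_apply i)
    _ = Fintype.card ι * ρ B := by simp [hi]

variable [PseudoMetricSpace X] [OpensMeasurableSpace X] [LinearOrder ι]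

open Classical in
theorem mul_sub_one_le_lintegral_pairwiseCost {h : ℝ → ℝ≥0∞} (hh : AntitoneOn h (Set.Ici 0))
    {ρ : Measure X} {μ : Measure (ι → X)} [IsProbabilityMeasure μ]
    (hmarg : ∀ i, μ.map (fun x => x i) = ρ) (z : X) (α : ℝ) :
    h (2 * α) * (Fintype.card ι * ρ (closedBall z α) - 1) ≤ ∫⁻ x, pairwiseCost h x ∂μ := by
  set pairs : (ι → X) → ℝ≥0∞ := fun x =>
    #{p : ι × ι | p.1 < p.2 ∧ x p.1 ∈ closedBall z α ∧ x p.2 ∈ closedBall z α}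
  have hcount : Fintype.card ι * ρ (closedBall z α) - 1 ≤ ∫⁻ x, pairs x ∂μ := by
    rw [tsub_le_iff_left, ← lintegral_card_filter_mem hmarg measurableSet_closedBall]
    calc ∫⁻ x, (#{i | x i ∈ closedBall z α} : ℝ≥0∞) ∂μ ≤ ∫⁻ x, 1 + pairs x ∂μ :=
          lintegral_mono fun x => by
            dsimp only [pairs]
            exact_mod_cast card_filter_le_one_add_card_filter_lt (fun i => x i ∈ closedBall z α)
      _ = 1 + ∫⁻ x, pairs x ∂μ := by
          rw [lintegral_add_left measurable_const, lintegral_const, measure_univ, one_mul]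
  calc h (2 * α) * (Fintype.card ι * ρ (closedBall z α) - 1)
      ≤ h (2 * α) * ∫⁻ x, pairs x ∂μ := by gcongr
    _ ≤ ∫⁻ x, h (2 * α) * pairs x ∂μ := lintegral_const_mul_le _ _
    _ ≤ ∫⁻ x, pairwiseCost h x ∂μ :=
        lintegral_mono fun x => mul_card_pairs_mem_closedBall_le_pairwiseCost hh x z α

end Coupling

theorem ENNReal.natCast_mul_sub_one_div_le_self {a : ℝ≥0∞} (ha : a ≤ 1) (n : ℕ) :
    (n * a - 1) / (n * (n - 1)) ≤ n * a - 1 := by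
  obtain hn | hn := le_or_gt 2 n
  · refine ENNReal.div_le_of_le_mul (le_mul_of_one_le_right' ?_)
    have h1 : (1 : ℝ≥0∞) ≤ n - 1 := by
      rw [← Nat.cast_one, ← ENNReal.natCast_sub]
      exact_mod_cast (by omega : 1 ≤ n - 1)
    exact one_le_mul_of_one_le_of_one_le (h1.trans tsub_le_self) h1
  · have : (n : ℝ≥0∞) * a ≤ 1 := mul_le_one' (by exact_mod_cast (Nat.lt_succ_iff.mp hn)) ha
    simp [tsub_eq_zero_of_le this]

theorem stmt4_general {X : Type*} [MetricSpace X] [MeasurableSpace X] [BorelSpace X]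
    (N : ℕ)
    (ρ : Measure X) [IsProbabilityMeasure ρ]
    (h : ℝ → ℝ≥0∞)
    (hanti : StrictAntiOn h (Set.Ici 0))
    (α : ℝ) :
    (⨅ (lam : Measure (Fin N → X))
        (_ : IsProbabilityMeasure lam ∧ ∀ i : Fin N, lam.map (fun x => x i) = ρ),
        ∫⁻ x, (∑ p ∈ Finset.univ.filter (fun p : Fin N × Fin N => p.1 < p.2),
          h (dist (x p.1) (x p.2))) ∂lam)
      ≥ h (2 * α) *
        (((N : ℝ≥0∞) * (⨆ x : X, ρ (closedBall x α)) - 1) /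
          ((N : ℝ≥0∞) * ((N : ℝ≥0∞) - 1))) := by
  refine le_iInf₂ fun μ ⟨_, hmarg⟩ => ?_
  have hκ : (⨆ z : X, ρ (closedBall z α)) ≤ 1 := iSup_le fun _ => prob_le_one
  calc h (2 * α) * (((N : ℝ≥0∞) * (⨆ z : X, ρ (closedBall z α)) - 1) / (N * (N - 1)))
      ≤ h (2 * α) * ((N : ℝ≥0∞) * (⨆ z : X, ρ (closedBall z α)) - 1) := by
        gcongr; exact ENNReal.natCast_mul_sub_one_div_le_self hκ N
    _ = ⨆ z : X, h (2 * α) * (N * ρ (closedBall z α) - 1) := by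
        rw [ENNReal.mul_iSup, ENNReal.iSup_sub, ENNReal.mul_iSup]
    _ ≤ ∫⁻ x, pairwiseCost h x ∂μ := iSup_le fun z => by
        simpa using mul_sub_one_le_lintegral_pairwiseCost hanti.antitoneOn hmarg z α

theorem stmt4 {X : Type*} [MetricSpace X] [PolishSpace X] [MeasurableSpace X] [BorelSpace X]
    (N : ℕ) (hN : 2 ≤ N)
    (ρ : Measure X) [IsProbabilityMeasure ρ]
    (h : ℝ → ℝ≥0∞)
    (hpos : ∀ t : ℝ, 0 ≤ t → 0 < h t)
    (hanti : StrictAntiOn h (Set.Ici 0))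
    (hcont : ContinuousOn h (Set.Ici 0))
    (hA : Tendsto h (nhdsWithin 0 (Set.Ioi 0)) (nhds ⊤) →
      (⨆ x : X, ρ {x}) < (N : ℝ≥0∞)⁻¹)
    (Cinf : ℝ≥0∞)
    (hCinf : Cinf = ⨅ (lam : Measure (Fin N → X))
        (_ : IsProbabilityMeasure lam ∧ ∀ i : Fin N, lam.map (fun x => x i) = ρ),
        essSup (fun x : Fin N → X =>
          ∑ p ∈ Finset.univ.filter (fun p : Fin N × Fin N => p.1 < p.2),
            h (dist (x p.1) (x p.2))) lam)
    (hfin : Cinf ≠ ⊤)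
    (α : ℝ) (hα : 0 ≤ α)
    (hinv : h α = Cinf / ((N : ℝ≥0∞) * ((N : ℝ≥0∞) - 1))) :
    (⨅ (lam : Measure (Fin N → X))
        (_ : IsProbabilityMeasure lam ∧ ∀ i : Fin N, lam.map (fun x => x i) = ρ),
        ∫⁻ x, (∑ p ∈ Finset.univ.filter (fun p : Fin N × Fin N => p.1 < p.2),
          h (dist (x p.1) (x p.2))) ∂lam)
      ≥ h (2 * α) *
        (((N : ℝ≥0∞) * (⨆ x : X, ρ (closedBall x α)) - 1) /
          ((N : ℝ≥0∞) * ((N : ℝ≥0∞) - 1))) :=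
  stmt4_general N ρ h hanti α
end

section
/- Let (X,d) be a Polish space, ρ a Borel probability measure on X, and h : [0,∞) → (0,∞] a strictly decreasing continuous function with inverse h^{-1}. Assume that if lim_{t→0^+} h(t) = +∞ then sup_{x∈X} ρ({x}) < 1/2, and assume 𝒞_∞(ρ) is finite with 𝒞_∞(ρ)/2 in the range of h. Then 𝒞(ρ) := inf over couplings λ of ρ with itself of ∫_{X×X} h(d(x,y)) dλ satisfies 𝒞(ρ) ≥ h( 2 h^{-1}( 𝒞_∞(ρ)/2 ) ) · ( 2κ_ρ( h^{-1}( 𝒞_∞(ρ)/2 ) ) − 1 ), where 𝒞_∞(ρ) := inf over couplings λ of the λ-essential supremum of h(d(x,y)) and κ_ρ(α) := sup_{x∈X} ρ(B̄(x,α)). -/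
open MeasureTheory Metric ENNReal Filter

/-! A coupling `λ` of `ρ` with itself charges both factors of `B̄(x,α) × B̄(x,α)` with mass
`ρ(B̄(x,α))`, so by inclusion–exclusion it gives mass at least `2 ρ(B̄(x,α)) - 1` to this
product, on which `d(x,y) ≤ 2α`. Since `h` is decreasing, the cost `h(d(x,y))` is at least
`h(2α)` there, and taking the supremum over `x` gives the bound. -/

section Coupling

variable {X : Type*} [PseudoMetricSpace X]

lemma closedBall_prod_closedBall_subset_dist_le (x : X) (α : ℝ) :
    closedBall x α ×ˢ closedBall x α ⊆ {p : X × X | dist p.1 p.2 ≤ 2 * α} := by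
  rintro ⟨a, b⟩ ⟨ha, hb⟩
  calc dist a b ≤ dist a x + dist b x := dist_triangle_right a b x
    _ ≤ 2 * α := by rw [mem_closedBall] at ha hb; linarith

variable [MeasurableSpace X] [OpensMeasurableSpace X]

lemma two_mul_measure_closedBall_le {ρ : Measure X} {lam : Measure (X × X)}
    [IsProbabilityMeasure lam] (hfst : lam.map Prod.fst = ρ) (hsnd : lam.map Prod.snd = ρ)
    (x : X) (α : ℝ) :
    2 * ρ (closedBall x α) ≤ lam {p | dist p.1 p.2 ≤ 2 * α} + 1 := by
  set E₁ : Set (X × X) := Prod.fst ⁻¹' closedBall x α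
  set E₂ : Set (X × X) := Prod.snd ⁻¹' closedBall x α
  have hE₁ : lam E₁ = ρ (closedBall x α) := by
    rw [← hfst, Measure.map_apply measurable_fst measurableSet_closedBall]
  have hE₂ : lam E₂ = ρ (closedBall x α) := by
    rw [← hsnd, Measure.map_apply measurable_snd measurableSet_closedBall]
  have hinter : E₁ ∩ E₂ ⊆ {p | dist p.1 p.2 ≤ 2 * α} := by
    rw [← Set.prod_eq]
    exact closedBall_prod_closedBall_subset_dist_le x α
  calc 2 * ρ (closedBall x α) = lam E₁ + lam E₂ := by rw [hE₁, hE₂, two_mul]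
    _ = lam (E₁ ∪ E₂) + lam (E₁ ∩ E₂) :=
        (measure_union_add_inter E₁ (measurable_snd measurableSet_closedBall)).symm
    _ ≤ 1 + lam {p | dist p.1 p.2 ≤ 2 * α} := add_le_add prob_le_one (measure_mono hinter)
    _ = lam {p | dist p.1 p.2 ≤ 2 * α} + 1 := add_comm _ _

lemma two_mul_iSup_measure_closedBall_sub_one_le {ρ : Measure X} {lam : Measure (X × X)}
    [IsProbabilityMeasure lam] (hfst : lam.map Prod.fst = ρ) (hsnd : lam.map Prod.snd = ρ)
    (α : ℝ) :
    2 * (⨆ x, ρ (closedBall x α)) - 1 ≤ lam {p | dist p.1 p.2 ≤ 2 * α} := by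
  rw [tsub_le_iff_right, ENNReal.mul_iSup]
  exact iSup_le fun x => two_mul_measure_closedBall_le hfst hsnd x α

lemma mul_measure_dist_le_le_lintegral [SecondCountableTopology X] {h : ℝ → ℝ≥0∞}
    (hanti : AntitoneOn h (Set.Ici 0)) (lam : Measure (X × X)) (r : ℝ) :
    h r * lam {p | dist p.1 p.2 ≤ r} ≤ ∫⁻ p, h (dist p.1 p.2) ∂lam := by
  have hS : MeasurableSet {p : X × X | dist p.1 p.2 ≤ r} :=
    measurableSet_le (measurable_fst.dist measurable_snd) measurable_const
  rw [← lintegral_indicator_const hS]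
  exact lintegral_mono <| Set.indicator_le fun p (hp : dist p.1 p.2 ≤ r) =>
    hanti dist_nonneg (dist_nonneg.trans hp) hp

end Coupling

theorem stmt9_general {X : Type*} [MetricSpace X] [PolishSpace X] [MeasurableSpace X] [BorelSpace X]
    (ρ : Measure X)
    (h : ℝ → ℝ≥0∞)
    (hanti : StrictAntiOn h (Set.Ici 0))
    (α : ℝ) :
    (⨅ (lam : Measure (X × X))
        (_ : IsProbabilityMeasure lam ∧ lam.map Prod.fst = ρ ∧ lam.map Prod.snd = ρ),
        ∫⁻ p, h (dist p.1 p.2) ∂lam)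
      ≥ h (2 * α) * (2 * (⨆ x : X, ρ (closedBall x α)) - 1) := by
  refine le_iInf fun lam => le_iInf fun ⟨_, hfst, hsnd⟩ => ?_
  calc h (2 * α) * (2 * (⨆ x : X, ρ (closedBall x α)) - 1)
      ≤ h (2 * α) * lam {p | dist p.1 p.2 ≤ 2 * α} :=
        mul_le_mul_right (two_mul_iSup_measure_closedBall_sub_one_le hfst hsnd α) _
    _ ≤ ∫⁻ p, h (dist p.1 p.2) ∂lam :=
        mul_measure_dist_le_le_lintegral hanti.antitoneOn lam (2 * α)

theorem stmt9 {X : Type*} [MetricSpace X] [PolishSpace X] [MeasurableSpace X] [BorelSpace X]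
    (ρ : Measure X) [IsProbabilityMeasure ρ]
    (h : ℝ → ℝ≥0∞)
    (hpos : ∀ t : ℝ, 0 ≤ t → 0 < h t)
    (hanti : StrictAntiOn h (Set.Ici 0))
    (hcont : ContinuousOn h (Set.Ici 0))
    (hA : Tendsto h (nhdsWithin 0 (Set.Ioi 0)) (nhds ⊤) →
      (⨆ x : X, ρ {x}) < 2⁻¹)
    (Cinf : ℝ≥0∞)
    (hCinf : Cinf = ⨅ (lam : Measure (X × X))
        (_ : IsProbabilityMeasure lam ∧ lam.map Prod.fst = ρ ∧ lam.map Prod.snd = ρ),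
        essSup (fun p : X × X => h (dist p.1 p.2)) lam)
    (hfin : Cinf ≠ ⊤)
    (α : ℝ) (hα : 0 ≤ α)
    (hinv : h α = Cinf / 2) :
    (⨅ (lam : Measure (X × X))
        (_ : IsProbabilityMeasure lam ∧ lam.map Prod.fst = ρ ∧ lam.map Prod.snd = ρ),
        ∫⁻ p, h (dist p.1 p.2) ∂lam)
      ≥ h (2 * α) * (2 * (⨆ x : X, ρ (closedBall x α)) - 1) :=
  stmt9_general ρ h hanti α
end

section
/- (Coulomb case in ℝ^d) Let ρ be a Borel probability measure on ℝ^d with sup_{x} ρ({x}) < 1/2, and suppose 𝒞_∞(ρ) := inf over couplings λ of ρ with itself of the λ-essential supremum of 1/|x−y| is finite and positive. Then inf over couplings λ of ρ with itself of ∫_{ℝ^{2d}} 1/|x−y| dλ(x,y) ≥ (𝒞_∞(ρ)/4) · ( 2κ_ρ( 2/𝒞_∞(ρ) ) − 1 ), where κ_ρ(α) := sup_{x∈ℝ^d} ρ(B̄(x,α)). -/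
/-!
If a coupling `λ` of `ρ` with itself is given and `B` is a closed ball of radius `α`, then
`λ (B ×ˢ B) ≥ ρ B + ρ B - 1` by inclusion–exclusion, and on `B ×ˢ B` the Coulomb cost is at least
`1 / (2α)`. Hence `𝒞(ρ) ≥ (2 κ_ρ(α) - 1) / (2α)` for every `α`, and `α = 2 / C` gives the bound.
-/

open MeasureTheory Metric ENNReal

namespace MeasureTheory.Measure

variable {X Y : Type*} [MeasurableSpace X] [MeasurableSpace Y]

theorem map_fst_add_map_snd_le (lam : Measure (X × Y)) {s : Set X} {t : Set Y}
    (hs : MeasurableSet s) (ht : MeasurableSet t) :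
    lam.map Prod.fst s + lam.map Prod.snd t ≤ lam Set.univ + lam (s ×ˢ t) := by
  rw [Measure.map_apply measurable_fst hs, Measure.map_apply measurable_snd ht,
    ← Set.prod_univ, ← Set.univ_prod,
    ← measure_union_add_inter _ (MeasurableSet.univ.prod ht), Set.prod_inter_prod,
    Set.inter_univ, Set.univ_inter]
  gcongr
  exact Set.subset_univ _

end MeasureTheory.Measure

section Coupling

variable {X : Type*} [PseudoMetricSpace X]

theorem inv_ofReal_two_mul_le_inv_edist {x : X} {r : ℝ} {p : X × X}
    (hp : p ∈ closedBall x r ×ˢ closedBall x r) :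
    (ENNReal.ofReal (2 * r))⁻¹ ≤ (edist p.1 p.2)⁻¹ := by
  obtain ⟨h₁, h₂⟩ := hp
  rw [ENNReal.inv_le_inv, edist_dist, two_mul]
  apply ENNReal.ofReal_le_ofReal
  calc dist p.1 p.2 ≤ dist p.1 x + dist p.2 x := dist_triangle_right _ _ _
    _ ≤ r + r := add_le_add (mem_closedBall.1 h₁) (mem_closedBall.1 h₂)

variable [MeasurableSpace X] [OpensMeasurableSpace X]

theorem inv_ofReal_two_mul_mul_le_lintegral_inv_edist {ρ : Measure X} {lam : Measure (X × X)}
    [IsProbabilityMeasure lam] (hfst : lam.map Prod.fst = ρ) (hsnd : lam.map Prod.snd = ρ)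
    (x : X) (r : ℝ) :
    (ENNReal.ofReal (2 * r))⁻¹ * (2 * ρ (closedBall x r) - 1) ≤
      ∫⁻ p, (edist p.1 p.2)⁻¹ ∂lam := by
  set B := closedBall x r
  have hB : MeasurableSet B := measurableSet_closedBall
  have hmass : 2 * ρ B - 1 ≤ lam (B ×ˢ B) := by
    have := lam.map_fst_add_map_snd_le hB hB
    rwa [hfst, hsnd, measure_univ, ← two_mul, ← tsub_le_iff_left] at this
  calc (ENNReal.ofReal (2 * r))⁻¹ * (2 * ρ B - 1)
      ≤ (ENNReal.ofReal (2 * r))⁻¹ * lam (B ×ˢ B) := by gcongr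
    _ = ∫⁻ p, (B ×ˢ B).indicator (fun _ => (ENNReal.ofReal (2 * r))⁻¹) p ∂lam :=
        (lintegral_indicator_const (hB.prod hB) _).symm
    _ ≤ ∫⁻ p, (edist p.1 p.2)⁻¹ ∂lam :=
        lintegral_mono (Set.indicator_le fun _ hp => inv_ofReal_two_mul_le_inv_edist hp)

end Coupling

/-- At `C = ⊤` both sides are `⊤`, because `⊤.toReal = 0` and `2 / 0 = 0` in `ℝ`. -/
theorem ENNReal.div_four_le_inv_ofReal_two_mul_two_div (C : ℝ≥0∞) :
    C / 4 ≤ (ENNReal.ofReal (2 * (2 / C.toReal)))⁻¹ := by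
  rcases eq_or_ne C ⊤ with rfl | hC
  · simp
  rcases eq_or_ne C 0 with rfl | hC0
  · simp
  rw [← mul_div_assoc, ENNReal.ofReal_div_of_pos (ENNReal.toReal_pos hC0 hC),
    ENNReal.ofReal_toReal hC, ENNReal.inv_div (Or.inr (by norm_num)) (Or.inr (by norm_num))]
  norm_num

theorem stmt10_general (d : ℕ)
    (ρ : Measure (EuclideanSpace ℝ (Fin d)))
    (Cinf : ℝ≥0∞) :
    (⨅ (lam : Measure (EuclideanSpace ℝ (Fin d) × EuclideanSpace ℝ (Fin d)))
        (_ : IsProbabilityMeasure lam ∧ lam.map Prod.fst = ρ ∧ lam.map Prod.snd = ρ),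
        ∫⁻ p, (edist p.1 p.2)⁻¹ ∂lam)
      ≥ (Cinf / 4) *
        (2 * (⨆ x : EuclideanSpace ℝ (Fin d), ρ (closedBall x (2 / Cinf.toReal))) - 1) := by
  refine le_iInf₂ fun lam ⟨_, hfst, hsnd⟩ => ?_
  set α := 2 / Cinf.toReal
  calc Cinf / 4 * (2 * (⨆ x, ρ (closedBall x α)) - 1)
      = ⨆ x, Cinf / 4 * (2 * ρ (closedBall x α) - 1) := by
        rw [ENNReal.mul_iSup, ENNReal.iSup_sub, ENNReal.mul_iSup]
    _ ≤ ⨆ x, (ENNReal.ofReal (2 * α))⁻¹ * (2 * ρ (closedBall x α) - 1) := by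
        gcongr
        exact ENNReal.div_four_le_inv_ofReal_two_mul_two_div Cinf
    _ ≤ ∫⁻ p, (edist p.1 p.2)⁻¹ ∂lam :=
        iSup_le fun x => inv_ofReal_two_mul_mul_le_lintegral_inv_edist hfst hsnd x α

theorem stmt10 (d : ℕ)
    (ρ : Measure (EuclideanSpace ℝ (Fin d))) [IsProbabilityMeasure ρ]
    (hatom : (⨆ x : EuclideanSpace ℝ (Fin d), ρ {x}) < 2⁻¹)
    (Cinf : ℝ≥0∞)
    (hCinf : Cinf = ⨅ (lam : Measure (EuclideanSpace ℝ (Fin d) × EuclideanSpace ℝ (Fin d)))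
        (_ : IsProbabilityMeasure lam ∧ lam.map Prod.fst = ρ ∧ lam.map Prod.snd = ρ),
        essSup (fun p => (edist p.1 p.2)⁻¹) lam)
    (hfin : Cinf ≠ ⊤) (hposC : 0 < Cinf) :
    (⨅ (lam : Measure (EuclideanSpace ℝ (Fin d) × EuclideanSpace ℝ (Fin d)))
        (_ : IsProbabilityMeasure lam ∧ lam.map Prod.fst = ρ ∧ lam.map Prod.snd = ρ),
        ∫⁻ p, (edist p.1 p.2)⁻¹ ∂lam)
      ≥ (Cinf / 4) *
        (2 * (⨆ x : EuclideanSpace ℝ (Fin d), ρ (closedBall x (2 / Cinf.toReal))) - 1) :=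
  stmt10_general d ρ Cinf
end

section
/- Let (X,d) be a Polish space, ρ a Borel probability measure on X with sup_{x} ρ({x}) < 1/2, and consider the Coulomb cost h(t) = 1/t. Set r_ρ := sup{ r > 0 : κ_ρ(r) ≤ 1/2 } (assumed to be the supremum of a nonempty set), where κ_ρ(r) := sup_{x∈X} ρ(B̄(x,r)). Let 0 < δ < 1/2. If inf_{x∈X} ρ( X \ B(x, 2r_ρ) ) ≤ δ, then 𝒞(ρ) ≥ ((1−2δ)/4) · 𝒞_∞(ρ), where 𝒞(ρ) := inf over couplings λ of ρ with itself of ∫ 1/d(x,y) dλ and 𝒞_∞(ρ) := inf over couplings λ of the λ-essential supremum of 1/d(x,y). -/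
/-!
Upper bound on `𝒞_∞`: for every `r' < r_ρ` there is a coupling moving every point by at least
`r'`. Partition `X` into countably many pieces of small diameter and join two pieces when they are
`r'`-apart. Since closed balls of radius `r > r'` have mass at most `1/2`, the pieces not joined to
a given piece carry mass at most `1/2`, and this is exactly what a symmetric fractional perfect
matching of the weighted graph needs: a fractional matching of maximal total weight (one exists
by compactness) that left a vertex unsaturated could be augmented along an edge or along a path of length two. Gluing the conditional laws of the
pieces along the matching gives the coupling.

Lower bound on `𝒞`: under any coupling, a ball `A` of radius `2 r_ρ` with `ρ Aᶜ ≤ δ` has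
`λ (A ×ˢ A) ≥ 1 - 2δ`, and `1 / d ≥ 1 / (4 r_ρ)` on `A ×ˢ A`.
-/

open scoped ENNReal
open Set Filter Topology MeasureTheory ProbabilityTheory Function Metric TopologicalSpace

noncomputable section

namespace SimpleGraph

variable {ι : Type*} (G : SimpleGraph ι) (p : ι → ℝ≥0∞)

def fractionalMatchings : Set (ι → ι → ℝ≥0∞) :=
  {q | (∀ i j, q i j = q j i) ∧ (∀ i j, ¬ G.Adj i j → q i j = 0) ∧
    ∀ i, ∑' j, q i j ≤ p i}

def totalWeight (q : ι → ι → ℝ≥0∞) : ℝ≥0∞ := ∑' i, ∑' j, q i j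

variable {G p}

lemma zero_mem_fractionalMatchings : 0 ∈ G.fractionalMatchings p :=
  ⟨fun _ _ => rfl, fun _ _ _ => rfl, fun _ => by simp⟩

lemma isClosed_fractionalMatchings : IsClosed (G.fractionalMatchings p) := by
  have hsymm : IsClosed {q : ι → ι → ℝ≥0∞ | ∀ i j, q i j = q j i} := by
    simp only [ofPred_forall]
    exact isClosed_iInter fun i => isClosed_iInter fun j =>
      isClosed_eq (by fun_prop) (by fun_prop)
  have hsupp : IsClosed {q : ι → ι → ℝ≥0∞ | ∀ i j, ¬ G.Adj i j → q i j = 0} := by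
    simp only [ofPred_forall]
    exact isClosed_iInter fun i => isClosed_iInter fun j => isClosed_iInter fun _ =>
      isClosed_eq (by fun_prop) continuous_const
  have hrow : IsClosed {q : ι → ι → ℝ≥0∞ | ∀ i, ∑' j, q i j ≤ p i} := by
    simp only [ENNReal.tsum_eq_iSup_sum, iSup_le_iff, ofPred_forall]
    exact isClosed_iInter fun i => isClosed_iInter fun s =>
      isClosed_le (continuous_finsetSum s fun _ _ => by fun_prop) continuous_const
  exact hsymm.inter (hsupp.inter hrow)

lemma totalWeight_le_sum_add_tsum_compl {q : ι → ι → ℝ≥0∞} (hq : q ∈ G.fractionalMatchings p)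
    (F : Finset ι) :
    totalWeight q ≤ ∑ i ∈ F, ∑ j ∈ F, q i j + 2 * ∑' i : ↥(F : Set ι)ᶜ, p i := by
  obtain ⟨hsymm, -, hrow⟩ := hq
  have hout : ∑' i : ↥(F : Set ι)ᶜ, ∑' j, q i j ≤ ∑' i : ↥(F : Set ι)ᶜ, p i :=
    ENNReal.tsum_le_tsum fun i => hrow i
  have hcross : ∑ i ∈ F, ∑' j : ↥(F : Set ι)ᶜ, q i j ≤ ∑' j : ↥(F : Set ι)ᶜ, p j :=
    calc ∑ i ∈ F, ∑' j : ↥(F : Set ι)ᶜ, q i j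
        ≤ ∑' i, ∑' j : ↥(F : Set ι)ᶜ, q i j := ENNReal.sum_le_tsum F
      _ = ∑' j : ↥(F : Set ι)ᶜ, ∑' i, q j i := by rw [ENNReal.tsum_comm]; simp_rw [hsymm]
      _ ≤ _ := ENNReal.tsum_le_tsum fun j => hrow j
  calc totalWeight q
      = ∑ i ∈ F, (∑ j ∈ F, q i j + ∑' j : ↥(F : Set ι)ᶜ, q i j)
          + ∑' i : ↥(F : Set ι)ᶜ, ∑' j, q i j := by
        simp only [totalWeight, ENNReal.sum_add_tsum_compl]
    _ ≤ ∑ i ∈ F, ∑ j ∈ F, q i j + 2 * ∑' i : ↥(F : Set ι)ᶜ, p i := by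
        rw [Finset.sum_add_distrib, two_mul, ← add_assoc]
        gcongr

lemma sum_sum_le_totalWeight (q : ι → ι → ℝ≥0∞) (F : Finset ι) :
    ∑ i ∈ F, ∑ j ∈ F, q i j ≤ totalWeight q :=
  (Finset.sum_le_sum fun _ _ => ENNReal.sum_le_tsum F).trans (ENNReal.sum_le_tsum F)

-- The mass of `q` outside `F × F` is controlled by the tail of `p`, which makes the total weight
-- upper semicontinuous on fractional matchings.
lemma totalWeight_eq_iInf {q : ι → ι → ℝ≥0∞} (hp : ∑' i, p i ≠ ∞)
    (hq : q ∈ G.fractionalMatchings p) :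
    totalWeight q =
      ⨅ F : Finset ι, (∑ i ∈ F, ∑ j ∈ F, q i j + 2 * ∑' i : ↥(F : Set ι)ᶜ, p i) := by
  refine le_antisymm (le_iInf (totalWeight_le_sum_add_tsum_compl hq)) ?_
  have htail : Tendsto (fun F : Finset ι => totalWeight q + 2 * ∑' i : ↥(F : Set ι)ᶜ, p i)
      atTop (𝓝 (totalWeight q + 2 * 0)) :=
    tendsto_const_nhds.add (ENNReal.Tendsto.const_mul (ENNReal.tendsto_tsum_compl_atTop_zero hp)
      (Or.inr ENNReal.ofNat_ne_top))
  rw [mul_zero, add_zero] at htail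
  exact ge_of_tendsto' htail fun F =>
    (iInf_le _ F).trans (add_le_add_left (sum_sum_le_totalWeight q F) _)

lemma exists_isMaxOn_totalWeight (hp : ∑' i, p i ≠ ∞) :
    ∃ q ∈ G.fractionalMatchings p, IsMaxOn totalWeight (G.fractionalMatchings p) q := by
  have husc : UpperSemicontinuous fun q : ι → ι → ℝ≥0∞ =>
      ⨅ F : Finset ι, (∑ i ∈ F, ∑ j ∈ F, q i j + 2 * ∑' i : ↥(F : Set ι)ᶜ, p i) :=
    upperSemicontinuous_iInf fun F => Continuous.upperSemicontinuous (by fun_prop)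
  obtain ⟨q, hq, hmax⟩ := (husc.upperSemicontinuousOn _).exists_isMaxOn
    ⟨0, zero_mem_fractionalMatchings⟩ isClosed_fractionalMatchings.isCompact
  refine ⟨q, hq, fun q' hq' => ?_⟩
  show totalWeight q' ≤ totalWeight q
  rw [totalWeight_eq_iInf hp hq, totalWeight_eq_iInf hp hq']
  exact hmax hq'

lemma totalWeight_add (q q' : ι → ι → ℝ≥0∞) :
    totalWeight (q + q') = totalWeight q + totalWeight q' := by
  simp [totalWeight, ENNReal.tsum_add]

lemma totalWeight_le_tsum {q : ι → ι → ℝ≥0∞} (hq : q ∈ G.fractionalMatchings p) :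
    totalWeight q ≤ ∑' i, p i :=
  ENNReal.tsum_le_tsum hq.2.2

lemma not_isMaxOn_of_totalWeight_eq_add (hp : ∑' i, p i ≠ ∞) {q q' : ι → ι → ℝ≥0∞}
    (hq : q ∈ G.fractionalMatchings p) (hq' : q' ∈ G.fractionalMatchings p) {ε : ℝ≥0∞}
    (hε : ε ≠ 0) (h : totalWeight q' = totalWeight q + ε) :
    ¬ IsMaxOn totalWeight (G.fractionalMatchings p) q := fun hmax =>
  (ENNReal.lt_add_right ((totalWeight_le_tsum hq).trans_lt hp.lt_top).ne hε).not_ge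
    (h ▸ hmax hq')

section edgeWeight

variable [DecidableEq ι]

def edgeWeight (u v : ι) (ε : ℝ≥0∞) : ι → ι → ℝ≥0∞ := fun x y =>
  (if x = u ∧ y = v then ε else 0) + (if x = v ∧ y = u then ε else 0)

lemma edgeWeight_comm (u v : ι) (ε : ℝ≥0∞) (x y : ι) :
    edgeWeight u v ε x y = edgeWeight u v ε y x := by
  simp only [edgeWeight, add_comm, and_comm]

lemma edgeWeight_eq_zero_of_not_adj {u v x y : ι} (huv : G.Adj u v) (hxy : ¬ G.Adj x y)
    (ε : ℝ≥0∞) : edgeWeight u v ε x y = 0 := by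
  have h1 : ¬ (x = u ∧ y = v) := by rintro ⟨rfl, rfl⟩; exact hxy huv
  have h2 : ¬ (x = v ∧ y = u) := by rintro ⟨rfl, rfl⟩; exact hxy huv.symm
  simp [edgeWeight, h1, h2]

lemma tsum_edgeWeight (u v : ι) (ε : ℝ≥0∞) (x : ι) :
    ∑' y, edgeWeight u v ε x y = (if x = u then ε else 0) + (if x = v then ε else 0) := by
  simp only [edgeWeight, ENNReal.tsum_add]
  congr 1 <;> split_ifs with h <;> simp [h]

lemma totalWeight_edgeWeight (u v : ι) (ε : ℝ≥0∞) :
    totalWeight (edgeWeight u v ε) = 2 * ε := by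
  simp [totalWeight, tsum_edgeWeight, ENNReal.tsum_add, two_mul]

lemma not_isMaxOn_of_adj_of_lt (hp : ∑' i, p i ≠ ∞) {q : ι → ι → ℝ≥0∞}
    (hq : q ∈ G.fractionalMatchings p) {a j : ι} (haj : G.Adj a j)
    (ha : ∑' y, q a y < p a) (hj : ∑' y, q j y < p j) :
    ¬ IsMaxOn totalWeight (G.fractionalMatchings p) q := by
  set ε := min (p a - ∑' y, q a y) (p j - ∑' y, q j y)
  have hε : ε ≠ 0 := (lt_min (tsub_pos_of_lt ha) (tsub_pos_of_lt hj)).ne'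
  obtain ⟨hsymm, hsupp, hrow⟩ := hq
  have hq' : q + edgeWeight a j ε ∈ G.fractionalMatchings p := by
    refine ⟨fun x y => by simp only [Pi.add_apply, hsymm x y, edgeWeight_comm a j ε x y],
      fun x y hxy => by simp [hsupp x y hxy, edgeWeight_eq_zero_of_not_adj haj hxy],
      fun x => ?_⟩
    simp only [Pi.add_apply, ENNReal.tsum_add, tsum_edgeWeight]
    by_cases hxa : x = a
    · subst hxa
      simpa [haj.ne] using add_le_of_le_tsub_left_of_le (hrow x) (min_le_left _ _)
    by_cases hxj : x = j
    · subst hxj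
      simpa [hxa] using add_le_of_le_tsub_left_of_le (hrow x) (min_le_right _ _)
    simpa [hxa, hxj] using hrow x
  exact not_isMaxOn_of_totalWeight_eq_add hp ⟨hsymm, hsupp, hrow⟩ hq'
    (mul_ne_zero two_ne_zero hε) (by rw [totalWeight_add, totalWeight_edgeWeight])

lemma edgeWeight_le {q : ι → ι → ℝ≥0∞} (hsymm : ∀ i j, q i j = q j i) {i j : ι} (hij : i ≠ j)
    {ε : ℝ≥0∞} (hε : ε ≤ q i j) : edgeWeight i j ε ≤ q := fun x y => by
  simp only [edgeWeight]
  split_ifs with h1 h2 h2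
  · exact absurd (h1.1.symm.trans h2.1) hij
  · obtain ⟨rfl, rfl⟩ := h1; simpa using hε
  · obtain ⟨rfl, rfl⟩ := h2; simpa [hsymm x y] using hε
  · simp

lemma not_isMaxOn_of_adj_of_adj_of_ne_zero (hp : ∑' i, p i ≠ ∞) {q : ι → ι → ℝ≥0∞}
    (hq : q ∈ G.fractionalMatchings p) {a i j : ι} (hai : G.Adj a i) (haj : G.Adj a j)
    (hij : q i j ≠ 0) (ha : ∑' y, q a y < p a) :
    ¬ IsMaxOn totalWeight (G.fractionalMatchings p) q := by
  obtain ⟨hsymm, hsupp, hrow⟩ := hq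
  have hadj : G.Adj i j := by_contra fun h => hij (hsupp i j h)
  -- Move `ε` from the edge `ij` to the edges `ai` and `aj`: only the load of `a` changes.
  set ε := min ((p a - ∑' y, q a y) / 2) (q i j)
  have hε : ε ≠ 0 :=
    (lt_min (ENNReal.half_pos (tsub_pos_of_lt ha).ne') (pos_iff_ne_zero.2 hij)).ne'
  set q₀ := q - edgeWeight i j ε
  have hq₀ : q₀ + edgeWeight i j ε = q :=
    tsub_add_cancel_of_le (edgeWeight_le hsymm hadj.ne (min_le_right _ _))
  set q' := q₀ + edgeWeight a i ε + edgeWeight a j ε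
  have hrow' : ∀ x, ∑' y, q' x y =
      ∑' y, q x y + ((if x = a then ε else 0) + (if x = a then ε else 0)) := by
    intro x
    rw [← hq₀]
    simp only [q', Pi.add_apply, ENNReal.tsum_add, tsum_edgeWeight]
    ring
  have hq' : q' ∈ G.fractionalMatchings p := by
    refine ⟨fun x y => ?_, fun x y hxy => ?_, fun x => ?_⟩
    · simp only [q', q₀, Pi.add_apply, Pi.sub_apply, hsymm x y, edgeWeight_comm _ _ ε x y]
    · simp [q', q₀, hsupp x y hxy, edgeWeight_eq_zero_of_not_adj hai hxy,
        edgeWeight_eq_zero_of_not_adj haj hxy]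
    · rw [hrow']
      by_cases hxa : x = a
      · subst hxa
        simp only [if_true]
        refine add_le_of_le_tsub_left_of_le (hrow x) ?_
        calc ε + ε ≤ (p x - ∑' y, q x y) / 2 + (p x - ∑' y, q x y) / 2 := by
              gcongr <;> exact min_le_left _ _
          _ = _ := ENNReal.add_halves _
      · simpa [hxa] using hrow x
  refine not_isMaxOn_of_totalWeight_eq_add hp ⟨hsymm, hsupp, hrow⟩ hq'
    (mul_ne_zero two_ne_zero hε) ?_
  rw [← hq₀]
  simp only [q', totalWeight_add, totalWeight_edgeWeight]

end edgeWeight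

lemma le_tsum_of_neighbors_saturated [DecidableRel G.Adj] (hp : ∑' i, p i = 1)
    {q : ι → ι → ℝ≥0∞} (hq : q ∈ G.fractionalMatchings p) {a : ι}
    (hhalf : ∑' j, (if G.Adj a j then 0 else p j) ≤ 2⁻¹)
    (hsat : ∀ j, G.Adj a j → ∑' y, q j y = p j)
    (hindep : ∀ i j, G.Adj a i → G.Adj a j → q i j = 0) : p a ≤ ∑' y, q a y := by
  classical
  obtain ⟨hsymm, -, hrow⟩ := hq
  set M := ∑' j, if G.Adj a j then p j else 0
  set C := ∑' j, if G.Adj a j then 0 else p j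
  have hMC : M + C = 1 := by
    rw [← ENNReal.tsum_add, ← hp]
    exact tsum_congr fun j => by split_ifs <;> simp
  have hCM : C ≤ M := by
    refine (ENNReal.add_le_add_iff_right (hhalf.trans_lt (by norm_num)).ne).1 ?_
    rw [hMC, ← ENNReal.inv_two_add_inv_two]
    exact add_le_add hhalf hhalf
  have hM : M ≠ ∞ := ne_top_of_le_ne_top ENNReal.one_ne_top (hMC ▸ le_self_add)
  have hM' : M = ∑' m, ∑' j, if G.Adj a j then q m j else 0 := by
    rw [ENNReal.tsum_comm]
    refine tsum_congr fun j => ?_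
    split_ifs with h
    · rw [← hsat j h]
      exact tsum_congr fun m => hsymm j m
    · simp
  -- The saturated neighbours of `a` get their mass only from `a` and from non-neighbours of `a`.
  have hcount : M + p a ≤ ∑' y, q a y + C :=
    calc M + p a
        = ∑' m, ((∑' j, if G.Adj a j then q m j else 0) + if m = a then p a else 0) := by
          rw [ENNReal.tsum_add, tsum_ite_eq, hM']
      _ ≤ ∑' m, ((if m = a then ∑' y, q a y else 0) + if G.Adj a m then 0 else p m) := by
          refine ENNReal.tsum_le_tsum fun m => ?_
          by_cases hma : m = a
          · subst hma
            simp only [if_true, SimpleGraph.irrefl, if_false]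
            gcongr
            split_ifs <;> simp
          by_cases ham : G.Adj a m
          · have hzero : ∀ j, (if G.Adj a j then q m j else 0) = 0 := fun j => by
              split_ifs with h
              exacts [hindep m j ham h, rfl]
            simp [hma, ham, hzero]
          · simpa [hma, ham] using
              (ENNReal.tsum_le_tsum fun j => by split_ifs <;> simp).trans (hrow m)
      _ = ∑' y, q a y + C := by rw [ENNReal.tsum_add, tsum_ite_eq]
  exact (ENNReal.add_le_add_iff_left hM).1
    (hcount.trans ((add_le_add_right hCM _).trans_eq (add_comm _ _)))

theorem exists_perfect_fractionalMatching [DecidableRel G.Adj] (hp : ∑' i, p i = 1)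
    (hhalf : ∀ a, p a ≠ 0 → ∑' j, (if G.Adj a j then 0 else p j) ≤ 2⁻¹) :
    ∃ q ∈ G.fractionalMatchings p, ∀ i, ∑' j, q i j = p i := by
  classical
  have hp' : ∑' i, p i ≠ ∞ := hp ▸ ENNReal.one_ne_top
  obtain ⟨q, hq, hmax⟩ := exists_isMaxOn_totalWeight (G := G) hp'
  refine ⟨q, hq, fun a => (hq.2.2 a).antisymm (not_lt.1 fun ha => ?_)⟩
  have hsat : ∀ j, G.Adj a j → ∑' y, q j y = p j := fun j haj =>
    (hq.2.2 j).antisymm (not_lt.1 fun hj => not_isMaxOn_of_adj_of_lt hp' hq haj ha hj hmax)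
  have hindep : ∀ i j, G.Adj a i → G.Adj a j → q i j = 0 := fun i j hai haj =>
    by_contra fun hij => not_isMaxOn_of_adj_of_adj_of_ne_zero hp' hq hai haj hij ha hmax
  exact ha.not_ge
    (le_tsum_of_neighbors_saturated hp hq (hhalf a (ne_bot_of_gt ha)) hsat hindep)

end SimpleGraph

section blockCoupling

variable {X ι : Type*} [MeasurableSpace X] {ρ : Measure X} {A : ι → Set X}
  {q : ι → ι → ℝ≥0∞}

lemma tsum_measure_inter_of_partition [Countable ι] (hA : ∀ i, MeasurableSet (A i))
    (hdisj : Pairwise (Disjoint on A)) (hcover : ⋃ i, A i = univ) {s : Set X}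
    (hs : MeasurableSet s) : ∑' i, ρ (A i ∩ s) = ρ s := by
  rw [← measure_iUnion (fun i j hij => (hdisj hij).mono inter_subset_left inter_subset_left)
    fun i => (hA i).inter hs, ← iUnion_inter, hcover, univ_inter]

variable (ρ A q) in
def blockCoupling : Measure (X × X) :=
  Measure.sum fun z : ι × ι => q z.1 z.2 • (ρ[|A z.1]).prod ρ[|A z.2]

lemma map_fst_blockCoupling [Countable ι] [IsFiniteMeasure ρ] (hA : ∀ i, MeasurableSet (A i))
    (hdisj : Pairwise (Disjoint on A)) (hcover : ⋃ i, A i = univ) (hsymm : ∀ i j, q i j = q j i)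
    (hrow : ∀ i, ∑' j, q i j = ρ (A i)) :
    (blockCoupling ρ A q).map Prod.fst = ρ := by
  ext s hs
  have hcol : ∀ i j, q i j * ρ[|A j] univ = q i j := by
    intro i j
    rcases eq_or_ne (ρ (A j)) 0 with h | h
    · have : q i j = 0 := by
        rw [hsymm, ← nonpos_iff_eq_zero, ← h, ← hrow]
        exact ENNReal.le_tsum i
      simp [this]
    · have := cond_isProbabilityMeasure (μ := ρ) h
      simp
  calc (blockCoupling ρ A q).map Prod.fst s
      = ∑' i, ∑' j, ρ[s|A i] * (q i j * ρ[|A j] univ) := by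
        rw [Measure.map_apply measurable_fst hs, blockCoupling,
          Measure.sum_apply _ (measurable_fst hs), ENNReal.tsum_prod']
        simp [← prod_univ, Measure.prod_prod, mul_left_comm]
    _ = ∑' i, ρ[s|A i] * ρ (A i) := by simp_rw [hcol, ENNReal.tsum_mul_left, hrow]
    _ = ∑' i, ρ (A i ∩ s) := by simp_rw [cond_mul_eq_inter (hA _)]
    _ = ρ s := tsum_measure_inter_of_partition hA hdisj hcover hs

lemma map_swap_blockCoupling (hsymm : ∀ i j, q i j = q j i) :
    (blockCoupling ρ A q).map Prod.swap = blockCoupling ρ A q := by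
  rw [blockCoupling, Measure.map_sum measurable_swap.aemeasurable,
    ← Measure.sum_comp_equiv (Equiv.prodComm ι ι)]
  congr 1
  ext1 z
  simp [Measure.map_smul, Measure.prod_swap, hsymm z.1 z.2]

lemma map_snd_blockCoupling [Countable ι] [IsFiniteMeasure ρ] (hA : ∀ i, MeasurableSet (A i))
    (hdisj : Pairwise (Disjoint on A)) (hcover : ⋃ i, A i = univ) (hsymm : ∀ i j, q i j = q j i)
    (hrow : ∀ i, ∑' j, q i j = ρ (A i)) :
    (blockCoupling ρ A q).map Prod.snd = ρ := by
  rw [← map_swap_blockCoupling hsymm, Measure.map_map measurable_snd measurable_swap]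
  exact map_fst_blockCoupling hA hdisj hcover hsymm hrow

lemma blockCoupling_eq_zero [IsFiniteMeasure ρ] {s : Set (X × X)} (hs : MeasurableSet s)
    (h : ∀ i j, q i j ≠ 0 → Disjoint (A i ×ˢ A j) s) : blockCoupling ρ A q s = 0 := by
  rw [blockCoupling, Measure.sum_apply _ hs]
  refine ENNReal.tsum_eq_zero.2 fun z => ?_
  rcases eq_or_ne (q z.1 z.2) 0 with hq | hq
  · simp [hq]
  · simp [ProbabilityTheory.cond, Measure.prod_smul_left, Measure.prod_smul_right,
      Measure.prod_restrict, Measure.restrict_apply hs, (h _ _ hq).symm.inter_eq]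

end blockCoupling

section Coulomb

variable {X : Type*} [MeasurableSpace X]

def IsSelfCoupling (ρ : Measure X) (lam : Measure (X × X)) : Prop :=
  IsProbabilityMeasure lam ∧ lam.map Prod.fst = ρ ∧ lam.map Prod.snd = ρ

variable {ρ : Measure X} {lam : Measure (X × X)}

lemma IsSelfCoupling.one_sub_two_mul_le_measure_prod (hlam : IsSelfCoupling ρ lam) {A : Set X}
    (hA : MeasurableSet A) : 1 - 2 * ρ Aᶜ ≤ lam (A ×ˢ A) := by
  obtain ⟨hprob, hfst, hsnd⟩ := hlam
  have h₁ : lam (Prod.fst ⁻¹' Aᶜ) = ρ Aᶜ := by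
    rw [← Measure.map_apply measurable_fst hA.compl, hfst]
  have h₂ : lam (Prod.snd ⁻¹' Aᶜ) = ρ Aᶜ := by
    rw [← Measure.map_apply measurable_snd hA.compl, hsnd]
  rw [tsub_le_iff_right]
  calc 1 = lam univ := measure_univ.symm
    _ ≤ lam (A ×ˢ A) + lam (A ×ˢ A)ᶜ := measure_univ_le_add_compl _
    _ ≤ lam (A ×ˢ A) + (lam (Prod.fst ⁻¹' Aᶜ) + lam (Prod.snd ⁻¹' Aᶜ)) := by
        gcongr
        rw [compl_prod_eq_union, prod_univ, univ_prod]
        exact measure_union_le _ _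
    _ = lam (A ×ˢ A) + 2 * ρ Aᶜ := by rw [h₁, h₂, two_mul]

variable [PseudoEMetricSpace X]

def coulombCost (ρ : Measure X) : ℝ≥0∞ :=
  ⨅ (lam : Measure (X × X)) (_ : IsSelfCoupling ρ lam), ∫⁻ z, (edist z.1 z.2)⁻¹ ∂lam

def coulombCostInfty (ρ : Measure X) : ℝ≥0∞ :=
  ⨅ (lam : Measure (X × X)) (_ : IsSelfCoupling ρ lam),
    essSup (fun z => (edist z.1 z.2)⁻¹) lam

lemma IsSelfCoupling.inv_ediam_mul_le_lintegral (hlam : IsSelfCoupling ρ lam) {A : Set X}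
    (hA : MeasurableSet A) : (ediam A)⁻¹ * (1 - 2 * ρ Aᶜ) ≤ ∫⁻ z, (edist z.1 z.2)⁻¹ ∂lam :=
  calc (ediam A)⁻¹ * (1 - 2 * ρ Aᶜ) ≤ (ediam A)⁻¹ * lam (A ×ˢ A) := by
        gcongr
        exact hlam.one_sub_two_mul_le_measure_prod hA
    _ = ∫⁻ z, (A ×ˢ A).indicator (fun _ => (ediam A)⁻¹) z ∂lam :=
        (lintegral_indicator_const (hA.prod hA) _).symm
    _ ≤ ∫⁻ z, (edist z.1 z.2)⁻¹ ∂lam := lintegral_mono fun z => by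
        by_cases hz : z ∈ A ×ˢ A
        · rw [indicator_of_mem hz]
          exact ENNReal.inv_le_inv.2 (edist_le_ediam_of_mem hz.1 hz.2)
        · simp [hz]

end Coulomb

section

variable {X : Type*} [PseudoMetricSpace X] [MeasurableSpace X] [BorelSpace X]

def concentration (ρ : Measure X) (α : ℝ) : ℝ≥0∞ := ⨆ x, ρ (closedBall x α)

theorem exists_isSelfCoupling_ae_le_dist [SeparableSpace X] (ρ : Measure X)
    [IsProbabilityMeasure ρ] {r r' : ℝ} (hr' : 0 < r') (hr'r : r' < r)
    (hκ : ∀ x, ρ (closedBall x r) ≤ 2⁻¹) :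
    ∃ lam, IsSelfCoupling ρ lam ∧ ∀ᵐ z ∂lam, r' ≤ dist z.1 z.2 := by
  classical
  -- With pieces of diameter `(r - r') / 2`, a piece not joined to `A a` lies in `closedBall x r`
  -- for every `x ∈ A a`.
  obtain ⟨A, hA, hbdd, hdiam, hcover, hdisj⟩ :=
    SeparableSpace.exists_measurable_partition_diam_le X (half_pos (sub_pos.2 hr'r))
  let G : SimpleGraph ℕ :=
    { Adj n m := n ≠ m ∧ ∀ x ∈ A n, ∀ y ∈ A m, r' ≤ dist x y
      symm := ⟨fun n m h => ⟨h.1.symm, fun x hx y hy => dist_comm x y ▸ h.2 y hy x hx⟩⟩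
      loopless := ⟨fun n h => h.1 rfl⟩ }
  have hp : ∑' n, ρ (A n) = 1 := by
    simpa using tsum_measure_inter_of_partition (ρ := ρ) hA hdisj hcover MeasurableSet.univ
  have hhalf : ∀ a, ρ (A a) ≠ 0 → ∑' j, (if G.Adj a j then 0 else ρ (A j)) ≤ 2⁻¹ := by
    intro a ha
    obtain ⟨x₀, hx₀⟩ := nonempty_of_measure_ne_zero ha
    have hdist : ∀ j, ∀ y ∈ A j, ∀ z ∈ A j, dist y z ≤ (r - r') / 2 := fun j y hy z hz =>
      (dist_le_diam_of_mem (hbdd j) hy hz).trans (hdiam j)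
    have hsub : ∀ j, ¬ G.Adj a j → A j ⊆ closedBall x₀ r := by
      intro j hj y hy
      rw [mem_closedBall]
      by_cases haj : a = j
      · subst haj
        linarith [hdist a y hy x₀ hx₀]
      · obtain ⟨x, hx, z, hz, hxz⟩ : ∃ x ∈ A a, ∃ z ∈ A j, dist x z < r' := by
          simpa [G, haj] using hj
        linarith [dist_triangle4 y z x x₀, hdist j y hy z hz, hdist a x hx x₀ hx₀,
          dist_comm x z]
    calc ∑' j, (if G.Adj a j then 0 else ρ (A j))
        ≤ ∑' j, ρ (A j ∩ closedBall x₀ r) := ENNReal.tsum_le_tsum fun j => by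
          split_ifs with h
          · exact zero_le
          · rw [inter_eq_left.2 (hsub j h)]
      _ = ρ (closedBall x₀ r) :=
          tsum_measure_inter_of_partition hA hdisj hcover measurableSet_closedBall
      _ ≤ 2⁻¹ := hκ x₀
  obtain ⟨q, ⟨hsymm, hsupp, -⟩, hrow⟩ := G.exists_perfect_fractionalMatching hp hhalf
  have hfst := map_fst_blockCoupling hA hdisj hcover hsymm hrow
  have hprob : IsProbabilityMeasure (blockCoupling ρ A q) :=
    (Measure.isProbabilityMeasure_map_iff measurable_fst.aemeasurable).1
      (by rw [hfst]; infer_instance)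
  refine ⟨blockCoupling ρ A q, ⟨hprob, hfst, map_snd_blockCoupling hA hdisj hcover hsymm hrow⟩,
    ae_iff.2 (blockCoupling_eq_zero
      (isClosed_le continuous_const continuous_dist).measurableSet.compl fun i j hij => ?_)⟩
  have hadj : G.Adj i j := by_contra fun h => hij (hsupp i j h)
  exact disjoint_left.2 fun z hz => not_not.2 (hadj.2 z.1 hz.1 z.2 hz.2)

lemma coulombCostInfty_le_inv_of_lt [SeparableSpace X] (ρ : Measure X) [IsProbabilityMeasure ρ]
    {r r' : ℝ} (hr' : 0 < r') (hr'r : r' < r) (hκ : concentration ρ r ≤ 2⁻¹) :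
    coulombCostInfty ρ ≤ (ENNReal.ofReal r')⁻¹ := by
  obtain ⟨lam, hlam, hdist⟩ :=
    exists_isSelfCoupling_ae_le_dist ρ hr' hr'r fun x => (le_iSup _ x).trans hκ
  refine iInf₂_le_of_le lam hlam (essSup_le_of_ae_le _ ?_)
  filter_upwards [hdist] with z hz
  exact ENNReal.inv_le_inv.2 (edist_dist z.1 z.2 ▸ ENNReal.ofReal_le_ofReal hz)

lemma coulombCostInfty_le_inv_of_isLUB [SeparableSpace X] (ρ : Measure X)
    [IsProbabilityMeasure ρ] {rρ : ℝ} (hr : IsLUB {r | 0 < r ∧ concentration ρ r ≤ 2⁻¹} rρ) :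
    coulombCostInfty ρ ≤ (ENNReal.ofReal rρ)⁻¹ := by
  refine le_of_forall_gt_imp_ge_of_dense fun c hc => ?_
  obtain ⟨r', -, hcr', hr'ρ⟩ :=
    ENNReal.lt_iff_exists_real_btwn.1 (ENNReal.inv_lt_iff_inv_lt.1 hc)
  have hr' : 0 < r' := ENNReal.ofReal_pos.1 (hcr'.trans_le' zero_le)
  obtain ⟨r, ⟨-, hκ⟩, hr'r, -⟩ := hr.exists_between (ENNReal.ofReal_lt_ofReal_iff'.1 hr'ρ).1
  exact (coulombCostInfty_le_inv_of_lt ρ hr' hr'r hκ).trans (ENNReal.inv_le_iff_inv_le.2 hcr'.le)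

lemma inv_ofReal_mul_le_coulombCost (ρ : Measure X) (R : ℝ) :
    (ENNReal.ofReal (4 * R))⁻¹ * (1 - 2 * ⨅ x, ρ (ball x (2 * R))ᶜ) ≤ coulombCost ρ := by
  refine le_iInf₂ fun lam hlam => ?_
  rw [ENNReal.mul_iInf_of_ne two_ne_zero ENNReal.ofNat_ne_top, ENNReal.sub_iInf, ENNReal.mul_iSup]
  refine iSup_le fun x =>
    le_trans ?_ (hlam.inv_ediam_mul_le_lintegral (A := ball x (2 * R)) measurableSet_ball)
  gcongr
  refine ediam_le_iff.2 fun y hy z hz => ?_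
  rw [edist_dist]
  refine ENNReal.ofReal_le_ofReal ?_
  linarith [dist_triangle_right y z x, mem_ball.1 hy, mem_ball.1 hz]

end

end

theorem stmt11_general {X : Type*} [MetricSpace X] [PolishSpace X] [MeasurableSpace X] [BorelSpace X]
    (ρ : Measure X) [IsProbabilityMeasure ρ]
    (rρ : ℝ)
    (hr : IsLUB {r : ℝ | 0 < r ∧ (⨆ x : X, ρ (closedBall x r)) ≤ 2⁻¹} rρ)
    (δ : ℝ) (hδ0 : 0 < δ)
    (htail : (⨅ x : X, ρ (ball x (2 * rρ))ᶜ) ≤ ENNReal.ofReal δ) :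
    (⨅ (lam : Measure (X × X))
        (_ : IsProbabilityMeasure lam ∧ lam.map Prod.fst = ρ ∧ lam.map Prod.snd = ρ),
        ∫⁻ p, (edist p.1 p.2)⁻¹ ∂lam)
      ≥ ENNReal.ofReal ((1 - 2 * δ) / 4) *
        (⨅ (lam : Measure (X × X))
          (_ : IsProbabilityMeasure lam ∧ lam.map Prod.fst = ρ ∧ lam.map Prod.snd = ρ),
          essSup (fun p : X × X => (edist p.1 p.2)⁻¹) lam) := by
  have hδ : ENNReal.ofReal (1 - 2 * δ) ≤ 1 - 2 * ⨅ x, ρ (ball x (2 * rρ))ᶜ := by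
    rw [ENNReal.ofReal_sub _ (by positivity), ENNReal.ofReal_one, ENNReal.ofReal_mul zero_le_two,
      ENNReal.ofReal_ofNat]
    gcongr
  calc ENNReal.ofReal ((1 - 2 * δ) / 4) * coulombCostInfty ρ
      ≤ ENNReal.ofReal ((1 - 2 * δ) / 4) * (ENNReal.ofReal rρ)⁻¹ := by
        gcongr
        exact coulombCostInfty_le_inv_of_isLUB ρ hr
    _ = (ENNReal.ofReal (4 * rρ))⁻¹ * ENNReal.ofReal (1 - 2 * δ) := by
        rw [ENNReal.ofReal_mul zero_le_four, ENNReal.ofReal_div_of_pos four_pos,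
          ENNReal.mul_inv (Or.inl (by simp)) (Or.inl ENNReal.ofReal_ne_top), div_eq_mul_inv]
        ring
    _ ≤ (ENNReal.ofReal (4 * rρ))⁻¹ * (1 - 2 * ⨅ x, ρ (ball x (2 * rρ))ᶜ) := by gcongr
    _ ≤ coulombCost ρ := inv_ofReal_mul_le_coulombCost ρ rρ

theorem stmt11 {X : Type*} [MetricSpace X] [PolishSpace X] [MeasurableSpace X] [BorelSpace X]
    (ρ : Measure X) [IsProbabilityMeasure ρ]
    (hatom : (⨆ x : X, ρ {x}) < 2⁻¹)
    (rρ : ℝ)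
    (hr : IsLUB {r : ℝ | 0 < r ∧ (⨆ x : X, ρ (closedBall x r)) ≤ 2⁻¹} rρ)
    (hne : {r : ℝ | 0 < r ∧ (⨆ x : X, ρ (closedBall x r)) ≤ 2⁻¹}.Nonempty)
    (δ : ℝ) (hδ0 : 0 < δ) (hδ : δ < 1 / 2)
    (htail : (⨅ x : X, ρ (ball x (2 * rρ))ᶜ) ≤ ENNReal.ofReal δ) :
    (⨅ (lam : Measure (X × X))
        (_ : IsProbabilityMeasure lam ∧ lam.map Prod.fst = ρ ∧ lam.map Prod.snd = ρ),
        ∫⁻ p, (edist p.1 p.2)⁻¹ ∂lam)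
      ≥ ENNReal.ofReal ((1 - 2 * δ) / 4) *
        (⨅ (lam : Measure (X × X))
          (_ : IsProbabilityMeasure lam ∧ lam.map Prod.fst = ρ ∧ lam.map Prod.snd = ρ),
          essSup (fun p : X × X => (edist p.1 p.2)⁻¹) lam) :=
  stmt11_general ρ rρ hr δ hδ0 htail
end

section
/- Let ρ be a Borel probability measure on ℝ^d and consider the Coulomb cost h(t) = 1/t. Then 𝒞_∞(ρ) := inf over couplings λ of ρ with itself of the λ-essential supremum of 1/|x−y| satisfies 𝒞_∞(ρ) ≥ sup{ 1/(2α) : α > 0 and κ_ρ(α) > 1/2 }, where κ_ρ(α) := sup_{x∈ℝ^d} ρ(B̄(x,α)). -/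
/-! Let λ couple ρ with itself. If a closed ball `B` of radius `α` has `ρ B > 1/2`, the events
`x ∈ B` and `y ∈ B` cannot be λ-almost disjoint, so `B ×ˢ B` has positive λ-measure; on it
`|x - y| ≤ 2α`, hence the λ-essential supremum of `1/|x - y|` is at least `1/(2α)`. -/

open MeasureTheory Metric ENNReal

lemma le_essSup_of_forall_mem_le {α β : Type*} [MeasurableSpace α] [CompleteLinearOrder β]
    {μ : Measure α} {f : α → β} {s : Set α} {c : β} (hs : μ s ≠ 0) (hf : ∀ x ∈ s, c ≤ f x) :
    c ≤ essSup f μ := by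
  by_contra! hlt
  exact hs <| measure_mono_null (fun x hx hfx => (hf x hx).not_gt hfx) (ae_lt_of_essSup_lt hlt)

lemma measure_inter_pos_of_one_lt_add {α : Type*} [MeasurableSpace α] {μ : Measure α}
    [IsProbabilityMeasure μ] {s t : Set α} (ht : MeasurableSet t) (h : 1 < μ s + μ t) :
    0 < μ (s ∩ t) := by
  refine pos_iff_ne_zero.2 fun h0 => ?_
  have hunion := measure_union_add_inter (μ := μ) s ht
  rw [h0, add_zero] at hunion
  exact (hunion ▸ h).not_ge prob_le_one

lemma measure_prod_pos_of_one_lt_add {α β : Type*} [MeasurableSpace α] [MeasurableSpace β]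
    {lam : Measure (α × β)} [IsProbabilityMeasure lam] {A : Set α} {B : Set β}
    (hA : MeasurableSet A) (hB : MeasurableSet B)
    (h : 1 < lam.map Prod.fst A + lam.map Prod.snd B) : 0 < lam (A ×ˢ B) := by
  rw [Measure.map_apply measurable_fst hA, Measure.map_apply measurable_snd hB] at h
  exact Set.prod_eq A B ▸ measure_inter_pos_of_one_lt_add (measurable_snd hB) h

lemma ofReal_inv_two_mul_le_inv_edist {X : Type*} [PseudoMetricSpace X] {x p q : X} {α : ℝ}
    (hα : 0 < α) (hp : p ∈ closedBall x α) (hq : q ∈ closedBall x α) :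
    ENNReal.ofReal (1 / (2 * α)) ≤ (edist p q)⁻¹ := by
  have hpq : dist p q ≤ 2 * α := by
    linarith [dist_triangle_right p q x, mem_closedBall.1 hp, mem_closedBall.1 hq]
  rw [one_div, ENNReal.ofReal_inv_of_pos (by positivity), edist_dist]
  exact ENNReal.inv_le_inv' (ENNReal.ofReal_le_ofReal hpq)

theorem stmt12_general (d : ℕ)
    (ρ : Measure (EuclideanSpace ℝ (Fin d))) :
    (⨅ (lam : Measure (EuclideanSpace ℝ (Fin d) × EuclideanSpace ℝ (Fin d)))
        (_ : IsProbabilityMeasure lam ∧ lam.map Prod.fst = ρ ∧ lam.map Prod.snd = ρ),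
        essSup (fun p => (edist p.1 p.2)⁻¹) lam)
      ≥ ⨆ (α : ℝ) (_ : 0 < α ∧
          (2 : ℝ≥0∞)⁻¹ < ⨆ x : EuclideanSpace ℝ (Fin d), ρ (closedBall x α)),
          ENNReal.ofReal (1 / (2 * α)) := by
  refine le_iInf fun lam => le_iInf fun ⟨hlam, hfst, hsnd⟩ =>
    iSup_le fun α => iSup_le fun ⟨hα, hκ⟩ => ?_
  obtain ⟨x, hx⟩ := lt_iSup_iff.1 hκ
  have hmass : 1 < lam.map Prod.fst (closedBall x α) + lam.map Prod.snd (closedBall x α) := by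
    rw [hfst, hsnd, ← ENNReal.inv_two_add_inv_two]
    exact ENNReal.add_lt_add hx hx
  have hpos :=
    measure_prod_pos_of_one_lt_add measurableSet_closedBall measurableSet_closedBall hmass
  exact le_essSup_of_forall_mem_le hpos.ne' fun p ⟨hp, hq⟩ =>
    ofReal_inv_two_mul_le_inv_edist hα hp hq

theorem stmt12 (d : ℕ)
    (ρ : Measure (EuclideanSpace ℝ (Fin d))) [IsProbabilityMeasure ρ] :
    (⨅ (lam : Measure (EuclideanSpace ℝ (Fin d) × EuclideanSpace ℝ (Fin d)))
        (_ : IsProbabilityMeasure lam ∧ lam.map Prod.fst = ρ ∧ lam.map Prod.snd = ρ),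
        essSup (fun p => (edist p.1 p.2)⁻¹) lam)
      ≥ ⨆ (α : ℝ) (_ : 0 < α ∧
          (2 : ℝ≥0∞)⁻¹ < ⨆ x : EuclideanSpace ℝ (Fin d), ρ (closedBall x α)),
          ENNReal.ofReal (1 / (2 * α)) :=
  stmt12_general d ρ
end

section
/- For 0 < ε < 1/2, let ρ_ε be the probability measure on ℝ given by ρ_ε = (1/2) δ_0 + ε δ_1 + (1/2 − ε) δ_{1/ε}, and consider the Coulomb cost h(t) = 1/|x−y|. Then 𝒞(ρ_ε) = 2ε(3/2 − ε) and 𝒞_∞(ρ_ε) = 1, where 𝒞(ρ_ε) := inf over couplings λ of ρ_ε with itself of ∫ 1/|x−y| dλ and 𝒞_∞(ρ_ε) := inf over couplings λ of the λ-essential supremum of 1/|x−y|. In particular 𝒞(ρ_ε) → 0 as ε → 0 while 𝒞_∞(ρ_ε) = 1 for all such ε. -/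
/-!
The plan that sends the atom at `0` to `1` and to `1/ε` (and symmetrically back) couples `ρ_ε` with
itself at cost `2ε · 1 + (1 - 2ε) · ε`, and moves every point by at least `1`.

It is optimal for the Coulomb cost by weak duality: the potential `φ = 𝟙{0} - (1 - ε) 𝟙{1/ε}`
satisfies `φ x + φ y ≤ 1 / |x - y|` on the support, so every coupling costs at least
`2 ∫ φ dρ_ε = 1 - (1 - ε)(1 - 2ε)`. For the `L^∞` cost, any two atoms at distance more than `1`
include `1/ε`, which carries mass only `1/2 - ε < 1/2` in each marginal; hence no coupling can be
concentrated on such pairs.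
-/

open MeasureTheory Metric ENNReal

section Coupling

variable {α β : Type*} [MeasurableSpace α] [MeasurableSpace β]
  {μ : Measure α} {ν : Measure β} {π : Measure (α × β)}

lemma ae_fst_of_map_fst (hπ : π.map Prod.fst = μ) {p : α → Prop} (hp : ∀ᵐ x ∂μ, p x) :
    ∀ᵐ q ∂π, p q.1 :=
  ae_of_ae_map measurable_fst.aemeasurable (hπ ▸ hp)

lemma ae_snd_of_map_snd (hπ : π.map Prod.snd = ν) {p : β → Prop} (hp : ∀ᵐ y ∂ν, p y) :
    ∀ᵐ q ∂π, p q.2 :=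
  ae_of_ae_map measurable_snd.aemeasurable (hπ ▸ hp)

/-- Weak Kantorovich duality for the potentials `f - g` and `f' - g'`, written with their
nonnegative parts so that it makes sense in `ℝ≥0∞`. -/
lemma lintegral_add_le_lintegral_cost_add (h₁ : π.map Prod.fst = μ) (h₂ : π.map Prod.snd = ν)
    {c : α × β → ℝ≥0∞} {f g : α → ℝ≥0∞} {f' g' : β → ℝ≥0∞}
    (hf : Measurable f) (hg : Measurable g) (hf' : Measurable f') (hg' : Measurable g')
    (h : ∀ᵐ q ∂π, f q.1 + f' q.2 ≤ c q + g q.1 + g' q.2) :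
    ∫⁻ x, f x ∂μ + ∫⁻ y, f' y ∂ν ≤ ∫⁻ q, c q ∂π + ∫⁻ x, g x ∂μ + ∫⁻ y, g' y ∂ν := by
  subst h₁ h₂
  rw [lintegral_map hf measurable_fst, lintegral_map hf' measurable_snd,
    lintegral_map hg measurable_fst, lintegral_map hg' measurable_snd]
  calc _ = ∫⁻ q, (f q.1 + f' q.2) ∂π := (lintegral_add_left (hf.comp measurable_fst) _).symm
    _ ≤ ∫⁻ q, (c q + g q.1 + g' q.2) ∂π := lintegral_mono_ae h
    _ = _ := by
      have hg₁ : Measurable fun q : α × β => g q.1 := hg.comp measurable_fst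
      have hg₂ : Measurable fun q : α × β => g' q.2 := hg'.comp measurable_snd
      rw [lintegral_add_right _ hg₂, lintegral_add_right _ hg₁]

lemma measure_univ_le_of_ae_fst_mem_or_snd_mem (h₁ : π.map Prod.fst = μ)
    (h₂ : π.map Prod.snd = ν) {A : Set α} {B : Set β} (hA : MeasurableSet A) (hB : MeasurableSet B)
    (h : ∀ᵐ q ∂π, q.1 ∈ A ∨ q.2 ∈ B) : π Set.univ ≤ μ A + ν B := by
  subst h₁ h₂
  rw [Measure.map_apply measurable_fst hA, Measure.map_apply measurable_snd hB]
  calc π Set.univ ≤ π (Prod.fst ⁻¹' A ∪ Prod.snd ⁻¹' B) := measure_mono_ae (h.mono fun _ hq _ => hq)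
    _ ≤ _ := measure_union_le _ _

end Coupling

section CoulombExample

variable {ε : ℝ}

lemma inv_edist_zero_one_div (h0 : 0 < ε) : (edist (0 : ℝ) (1 / ε))⁻¹ = ENNReal.ofReal ε := by
  rw [edist_dist, dist_comm, Real.dist_0_eq_abs, abs_of_pos (by positivity),
    ← ENNReal.ofReal_inv_of_pos (by positivity)]
  simp

lemma inv_edist_zero_one : (edist (0 : ℝ) 1)⁻¹ = 1 := by
  simp [edist_dist]

noncomputable def rhoEps (ε : ℝ) : Measure ℝ :=
  (2 : ℝ≥0∞)⁻¹ • Measure.dirac 0 + ENNReal.ofReal ε • Measure.dirac 1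
    + ENNReal.ofReal (1 / 2 - ε) • Measure.dirac (1 / ε)

noncomputable def coulombPlan (ε : ℝ) : Measure (ℝ × ℝ) :=
  ENNReal.ofReal ε • (Measure.dirac (0, 1) + Measure.dirac (1, 0))
    + ENNReal.ofReal (1 / 2 - ε) • (Measure.dirac (0, 1 / ε) + Measure.dirac (1 / ε, 0))

lemma ae_rhoEps (ε : ℝ) : ∀ᵐ x ∂rhoEps ε, x = 0 ∨ x = 1 ∨ x = 1 / ε := by
  simp only [rhoEps, ae_add_measure_iff]
  refine ⟨⟨Measure.ae_smul_measure ?_ _, Measure.ae_smul_measure ?_ _⟩,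
    Measure.ae_smul_measure ?_ _⟩ <;> simp

lemma lintegral_rhoEps (f : ℝ → ℝ≥0∞) :
    ∫⁻ x, f x ∂rhoEps ε
      = 2⁻¹ * f 0 + ENNReal.ofReal ε * f 1 + ENNReal.ofReal (1 / 2 - ε) * f (1 / ε) := by
  simp [rhoEps, lintegral_add_measure, lintegral_smul_measure]

lemma rhoEps_singleton_one_div (h0 : ε ≠ 0) (h1 : ε ≠ 1) :
    rhoEps ε {1 / ε} = ENNReal.ofReal (1 / 2 - ε) := by
  simp [rhoEps, h0, h1]

lemma ofReal_add_ofReal_one_half_sub (h0 : 0 ≤ ε) (h : ε ≤ 1 / 2) :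
    ENNReal.ofReal ε + ENNReal.ofReal (1 / 2 - ε) = 2⁻¹ := by
  rw [← ENNReal.ofReal_add h0 (by linarith), add_sub_cancel, one_div,
    ENNReal.ofReal_inv_of_pos two_pos]
  simp

lemma isProbabilityMeasure_coulombPlan (h0 : 0 ≤ ε) (h : ε ≤ 1 / 2) :
    IsProbabilityMeasure (coulombPlan ε) := by
  constructor
  simp only [coulombPlan, Measure.add_apply, Measure.smul_apply, measure_univ, smul_eq_mul]
  rw [← add_mul, ofReal_add_ofReal_one_half_sub h0 h, one_add_one_eq_two,
    ENNReal.inv_mul_cancel two_ne_zero ofNat_ne_top]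

lemma map_fst_coulombPlan (h0 : 0 ≤ ε) (h : ε ≤ 1 / 2) :
    (coulombPlan ε).map Prod.fst = rhoEps ε := by
  simp only [coulombPlan, rhoEps, Measure.map_add _ _ measurable_fst, Measure.map_smul,
    Measure.map_dirac' measurable_fst, smul_add]
  rw [← ofReal_add_ofReal_one_half_sub h0 h, add_smul]
  abel

lemma map_snd_coulombPlan (h0 : 0 ≤ ε) (h : ε ≤ 1 / 2) :
    (coulombPlan ε).map Prod.snd = rhoEps ε := by
  simp only [coulombPlan, rhoEps, Measure.map_add _ _ measurable_snd, Measure.map_smul,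
    Measure.map_dirac' measurable_snd, smul_add]
  rw [← ofReal_add_ofReal_one_half_sub h0 h, add_smul]
  abel

lemma lintegral_coulombPlan (h0 : 0 < ε) (h : ε ≤ 1 / 2) :
    ∫⁻ p, (edist p.1 p.2)⁻¹ ∂coulombPlan ε = ENNReal.ofReal (2 * ε * (3 / 2 - ε)) := by
  simp only [coulombPlan, lintegral_add_measure, lintegral_smul_measure, lintegral_dirac,
    edist_comm (1 : ℝ) 0, edist_comm (1 / ε) 0, inv_edist_zero_one, inv_edist_zero_one_div h0,
    smul_eq_mul]
  rw [← ofReal_one, ← ofReal_add zero_le_one zero_le_one, ← ofReal_add h0.le h0.le,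
    ← ofReal_mul h0.le, ← ofReal_mul (by linarith), ← ofReal_add (by positivity) (by nlinarith)]
  ring_nf

lemma essSup_coulombPlan_le (h0 : 0 < ε) (h1 : ε ≤ 1) :
    essSup (fun p : ℝ × ℝ => (edist p.1 p.2)⁻¹) (coulombPlan ε) ≤ 1 := by
  refine essSup_le_of_ae_le 1 (?_ : ∀ᵐ p ∂coulombPlan ε, (edist p.1 p.2)⁻¹ ≤ 1)
  simp only [coulombPlan, ae_add_measure_iff]
  refine ⟨Measure.ae_smul_measure ?_ _, Measure.ae_smul_measure ?_ _⟩ <;>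
    simp only [ae_add_measure_iff, ae_dirac_eq, Filter.eventually_pure,
      edist_comm (1 : ℝ) 0, edist_comm (1 / ε) 0, inv_edist_zero_one, inv_edist_zero_one_div h0]
  · exact ⟨le_rfl, le_rfl⟩
  · exact ⟨ofReal_le_one.mpr h1, ofReal_le_one.mpr h1⟩

lemma indicator_add_le_inv_edist_add (h0 : 0 < ε) (h1 : ε < 1) {x y : ℝ}
    (hx : x = 0 ∨ x = 1 ∨ x = 1 / ε) (hy : y = 0 ∨ y = 1 ∨ y = 1 / ε) :
    ({0} : Set ℝ).indicator 1 x + ({0} : Set ℝ).indicator 1 y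
      ≤ (edist x y)⁻¹ + ({1 / ε} : Set ℝ).indicator (fun _ => ENNReal.ofReal (1 - ε)) x
        + ({1 / ε} : Set ℝ).indicator (fun _ => ENNReal.ofReal (1 - ε)) y := by
  have h10 : 1 / ε ≠ 0 := (one_div_pos.mpr h0).ne'
  have h11 : 1 / ε ≠ 1 := (one_lt_one_div h0 h1).ne'
  have hsum : ENNReal.ofReal ε + ENNReal.ofReal (1 - ε) = 1 := by
    rw [← ofReal_add h0.le (by linarith), add_sub_cancel, ofReal_one]
  rcases hx with rfl | rfl | rfl <;> rcases hy with rfl | rfl | rfl <;>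
    simp only [Set.indicator_apply, Set.mem_singleton_iff, Pi.one_apply, h10, h10.symm, h11.symm,
      one_ne_zero, hsum, if_true, if_false, edist_self, ENNReal.inv_zero, top_add, le_top,
      edist_comm (1 / ε) 0, edist_comm (1 : ℝ) 0, inv_edist_zero_one, inv_edist_zero_one_div h0,
      add_zero, zero_add, zero_le, le_refl]

lemma ofReal_le_lintegral_inv_edist (h0 : 0 < ε) (h : ε < 1 / 2) {π : Measure (ℝ × ℝ)}
    (h₁ : π.map Prod.fst = rhoEps ε) (h₂ : π.map Prod.snd = rhoEps ε) :
    ENNReal.ofReal (2 * ε * (3 / 2 - ε)) ≤ ∫⁻ p, (edist p.1 p.2)⁻¹ ∂π := by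
  have hdual := lintegral_add_le_lintegral_cost_add h₁ h₂ (c := fun p => (edist p.1 p.2)⁻¹)
    (measurable_one.indicator (measurableSet_singleton 0))
    (measurable_const.indicator (measurableSet_singleton (1 / ε)))
    (measurable_one.indicator (measurableSet_singleton 0))
    (measurable_const.indicator (measurableSet_singleton (1 / ε)))
    (by
      filter_upwards [ae_fst_of_map_fst h₁ (ae_rhoEps ε), ae_snd_of_map_snd h₂ (ae_rhoEps ε)]
        with p hx hy using indicator_add_le_inv_edist_add h0 (by linarith) hx hy)
  have h10 : 1 / ε ≠ 0 := (one_div_pos.mpr h0).ne'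
  have h11 : 1 / ε ≠ 1 := (one_lt_one_div h0 (by linarith)).ne'
  simp only [lintegral_rhoEps, Set.indicator_apply, Set.mem_singleton_iff, Pi.one_apply, h10,
    h10.symm, h11.symm, one_ne_zero, if_true, if_false, mul_zero, mul_one, add_zero, zero_add,
    ENNReal.inv_two_add_inv_two] at hdual
  have hneg : ENNReal.ofReal (1 / 2 - ε) * ENNReal.ofReal (1 - ε)
      + ENNReal.ofReal (1 / 2 - ε) * ENNReal.ofReal (1 - ε)
      = ENNReal.ofReal ((1 - ε) * (1 - 2 * ε)) := by
    rw [← ofReal_mul (by linarith), ← ofReal_add (by nlinarith) (by nlinarith)]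
    ring_nf
  calc ENNReal.ofReal (2 * ε * (3 / 2 - ε)) = 1 - ENNReal.ofReal ((1 - ε) * (1 - 2 * ε)) := by
        rw [← ofReal_one, ← ofReal_sub _ (by nlinarith)]
        ring_nf
    _ ≤ ∫⁻ p, (edist p.1 p.2)⁻¹ ∂π := by
        rw [tsub_le_iff_right, ← hneg, ← add_assoc]
        exact hdual

lemma one_le_inv_edist_of_mem {x y : ℝ} (hx : x = 0 ∨ x = 1) (hy : y = 0 ∨ y = 1) :
    1 ≤ (edist x y)⁻¹ := by
  rw [ENNReal.one_le_inv]
  rcases hx with rfl | rfl <;> rcases hy with rfl | rfl <;> simp [edist_dist]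

lemma one_le_essSup_inv_edist (h0 : 0 < ε) (h : ε < 1 / 2) {π : Measure (ℝ × ℝ)}
    [IsProbabilityMeasure π] (h₁ : π.map Prod.fst = rhoEps ε) (h₂ : π.map Prod.snd = rhoEps ε) :
    1 ≤ essSup (fun p : ℝ × ℝ => (edist p.1 p.2)⁻¹) π := by
  by_contra! hlt
  have hae : ∀ᵐ p ∂π, p.1 ∈ ({1 / ε} : Set ℝ) ∨ p.2 ∈ ({1 / ε} : Set ℝ) := by
    filter_upwards [ae_lt_of_essSup_lt hlt, ae_fst_of_map_fst h₁ (ae_rhoEps ε),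
      ae_snd_of_map_snd h₂ (ae_rhoEps ε)] with p hp hx hy
    by_contra! hc
    simp only [Set.mem_singleton_iff] at hc
    exact (one_le_inv_edist_of_mem (by tauto) (by tauto)).not_gt hp
  have hmass := measure_univ_le_of_ae_fst_mem_or_snd_mem h₁ h₂ (measurableSet_singleton _)
    (measurableSet_singleton _) hae
  rw [measure_univ, rhoEps_singleton_one_div h0.ne' (by linarith),
    ← ofReal_add (by linarith) (by linarith), ENNReal.one_le_ofReal] at hmass
  linarith

end CoulombExample

theorem stmt18 (ε : ℝ) (hε0 : 0 < ε) (hε : ε < 1 / 2)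
    (ρ : Measure ℝ)
    (hρ : ρ = (2 : ℝ≥0∞)⁻¹ • Measure.dirac (0 : ℝ)
        + ENNReal.ofReal ε • Measure.dirac (1 : ℝ)
        + ENNReal.ofReal (1 / 2 - ε) • Measure.dirac (1 / ε)) :
    (⨅ (lam : Measure (ℝ × ℝ))
        (_ : IsProbabilityMeasure lam ∧ lam.map Prod.fst = ρ ∧ lam.map Prod.snd = ρ),
        ∫⁻ p, (edist p.1 p.2)⁻¹ ∂lam)
      = ENNReal.ofReal (2 * ε * (3 / 2 - ε)) ∧
    (⨅ (lam : Measure (ℝ × ℝ))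
        (_ : IsProbabilityMeasure lam ∧ lam.map Prod.fst = ρ ∧ lam.map Prod.snd = ρ),
        essSup (fun p : ℝ × ℝ => (edist p.1 p.2)⁻¹) lam)
      = 1 := by
  obtain rfl : ρ = rhoEps ε := hρ
  have hplan : IsProbabilityMeasure (coulombPlan ε) ∧ (coulombPlan ε).map Prod.fst = rhoEps ε
      ∧ (coulombPlan ε).map Prod.snd = rhoEps ε :=
    ⟨isProbabilityMeasure_coulombPlan hε0.le hε.le, map_fst_coulombPlan hε0.le hε.le,
      map_snd_coulombPlan hε0.le hε.le⟩
  refine ⟨le_antisymm ?_ ?_, le_antisymm ?_ ?_⟩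
  · exact (iInf₂_le (coulombPlan ε) hplan).trans (lintegral_coulombPlan hε0 hε.le).le
  · exact le_iInf₂ fun π ⟨_, h₁, h₂⟩ => ofReal_le_lintegral_inv_edist hε0 hε h₁ h₂
  · exact (iInf₂_le (coulombPlan ε) hplan).trans (essSup_coulombPlan_le hε0 (by linarith))
  · exact le_iInf₂ fun π ⟨_, h₁, h₂⟩ => one_le_essSup_inv_edist hε0 hε h₁ h₂
end
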